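/- arXiv:1501.04902 — 4 statements merged into one kernel-verified Lean document; each statement's English description precedes it below -/
import Mathlib

section
/- Define the minimum error rate of a two-qubit state ρ as δ_min(ρ) = 1/2 - (1/4)(max_b ⟨σ₁⊗σ·b⟩ + max_{b'} ⟨σ₂⊗σ·b'⟩), where ⟨A⟩ = Tr[ρA] and the maxima run over unit vectors in R³. Then for the pure state Ω(γ) = |Ω(γ)⟩⟨Ω(γ)| with |Ω(γ)⟩ = cos(π/4-γ/2)|↑↑⟩ + sin(π/4-γ/2)|↓↓⟩ and the Werner state ρ_W(F) with F = cos²(γ/2), one has δ_min(ρ_W) = (2/3) δ_min(Ω), i.e., twirling the pure state reduces the error rate by a factor 2/3. -/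
open Matrix Kronecker Complex

noncomputable section

abbrev M2 := Matrix (Fin 2) (Fin 2) ℂ
abbrev M4 := Matrix (Fin 2 × Fin 2) (Fin 2 × Fin 2) ℂ

/-- Pauli matrices -/
def σ1 : M2 := !![0, 1; 1, 0]
def σ2 : M2 := !![0, -Complex.I; Complex.I, 0]
def σ3 : M2 := !![1, 0; 0, -1]
def σ : Fin 3 → M2 := ![σ1, σ2, σ3]

/-- computational basis kets of one qubit -/
def up : Fin 2 → ℂ := ![1, 0]
def dn : Fin 2 → ℂ := ![0, 1]

/-- the pure state |Ω(γ)⟩ = cos(π/4-γ/2)|↑↑⟩ + sin(π/4-γ/2)|↓↓⟩ as a vector -/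
def Ωvec (γ : ℝ) : Fin 2 × Fin 2 → ℂ := fun p =>
  (Real.cos (Real.pi/4 - γ/2) : ℂ) * (up p.1 * up p.2)
  + (Real.sin (Real.pi/4 - γ/2) : ℂ) * (dn p.1 * dn p.2)

/-- the rank-one projector |v⟩⟨v| -/
def proj (v : Fin 2 × Fin 2 → ℂ) : M4 :=
  Matrix.vecMulVec v (fun p => (starRingEnd ℂ) (v p))

/-- the density operator of |Ω(γ)⟩ -/
def Ωstate (γ : ℝ) : M4 := proj (Ωvec γ)

/-- the Bell states -/
def Φp : Fin 2 × Fin 2 → ℂ := fun p => ((up p.1 * up p.2) + (dn p.1 * dn p.2)) / (Real.sqrt 2 : ℂ)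
def Φm : Fin 2 × Fin 2 → ℂ := fun p => ((up p.1 * up p.2) - (dn p.1 * dn p.2)) / (Real.sqrt 2 : ℂ)
def Ψp : Fin 2 × Fin 2 → ℂ := fun p => ((up p.1 * dn p.2) + (dn p.1 * up p.2)) / (Real.sqrt 2 : ℂ)
def Ψm : Fin 2 × Fin 2 → ℂ := fun p => ((up p.1 * dn p.2) - (dn p.1 * up p.2)) / (Real.sqrt 2 : ℂ)

/-- the Werner state in Bloch form -/
def ρW (F : ℝ) : M4 :=
  (1/4 : ℂ) • ((1 : M4) + (((4*F-1)/3 : ℝ) : ℂ) • (σ1 ⊗ₖ σ1 - σ2 ⊗ₖ σ2 + σ3 ⊗ₖ σ3))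

/-- σ·n for a direction n ∈ ℝ³ -/
def pdot (n : Fin 3 → ℝ) : M2 := ∑ i, ((n i : ℂ)) • σ i

/-- correlation function ⟨A ⊗ B⟩ in the state ρ -/
def corr (ρ : M4) (A B : M2) : ℝ := (Matrix.trace (ρ * (A ⊗ₖ B))).re

/-- squared Hilbert-Schmidt norm -/
def hs2 (A : M4) : ℝ := (Matrix.trace (A * Aᴴ)).re

/-- the post-measurement (classical-quantum) state after a projective
measurement {P, 1-P} on the first qubit -/
def postMeas (P : M2) (ρ : M4) : M4 :=
  (P ⊗ₖ (1 : M2)) * ρ * (P ⊗ₖ (1 : M2))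
  + (((1 : M2) - P) ⊗ₖ (1 : M2)) * ρ * (((1 : M2) - P) ⊗ₖ (1 : M2))

/-- geometric discord: minimal squared Hilbert-Schmidt distance of ρ to the
classical-quantum states obtained by rank-one projective measurements on qubit 1 -/
def Dg (ρ : M4) : ℝ :=
  sInf {r : ℝ | ∃ P : M2, P.IsHermitian ∧ P * P = P ∧ P.trace = 1 ∧
    r = hs2 (ρ - postMeas P ρ)}

/-- minimal error rate of the key in the general EPR protocol -/
def δmin (ρ : M4) : ℝ :=
  1/2 - (1/4) * (sSup {r : ℝ | ∃ n : Fin 3 → ℝ, (∑ i, n i ^ 2) = 1 ∧ r = corr ρ σ1 (pdot n)}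
    + sSup {r : ℝ | ∃ n : Fin 3 → ℝ, (∑ i, n i ^ 2) = 1 ∧ r = corr ρ σ2 (pdot n)})


section Aux

lemma cos_id (γ : ℝ) : Real.cos γ = 2 * Real.sin (Real.pi/4 - γ/2) * Real.cos (Real.pi/4 - γ/2) := by
  rw [← Real.sin_two_mul]
  rw [show 2*(Real.pi/4 - γ/2) = Real.pi/2 - γ by ring, Real.sin_pi_div_two_sub]

lemma corr_Ω1 (γ : ℝ) (n : Fin 3 → ℝ) :
    corr (Ωstate γ) σ1 (pdot n) = n 0 * Real.cos γ := by
  rw [cos_id γ]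
  simp only [corr, Ωstate, proj, Ωvec, pdot, σ, σ1, σ2, σ3, up, dn,
    Matrix.trace, Matrix.diag, Matrix.mul_apply, Fintype.sum_prod_type,
    Fin.sum_univ_succ, Fin.sum_univ_zero, kroneckerMap_apply,
    Matrix.vecMulVec_apply, Matrix.smul_apply, Matrix.sum_apply,
    Matrix.cons_val', Matrix.cons_val_zero, Matrix.cons_val_one, Matrix.head_cons,
    Matrix.empty_val', Matrix.cons_val_fin_one, Matrix.head_fin_const,
    Matrix.add_apply, smul_eq_mul]
  simp [Complex.ext_iff, -Complex.ofReal_cos, -Complex.ofReal_sin]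
  ring_nf

lemma corr_Ω2 (γ : ℝ) (n : Fin 3 → ℝ) :
    corr (Ωstate γ) σ2 (pdot n) = -(n 1) * Real.cos γ := by
  rw [cos_id γ]
  simp only [corr, Ωstate, proj, Ωvec, pdot, σ, σ1, σ2, σ3, up, dn,
    Matrix.trace, Matrix.diag, Matrix.mul_apply, Fintype.sum_prod_type,
    Fin.sum_univ_succ, Fin.sum_univ_zero, kroneckerMap_apply,
    Matrix.vecMulVec_apply, Matrix.smul_apply, Matrix.sum_apply,
    Matrix.cons_val', Matrix.cons_val_zero, Matrix.cons_val_one, Matrix.head_cons,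
    Matrix.empty_val', Matrix.cons_val_fin_one, Matrix.head_fin_const,
    Matrix.add_apply, smul_eq_mul]
  simp [Complex.ext_iff, -Complex.ofReal_cos, -Complex.ofReal_sin]
  ring_nf

lemma corr_ρW1 (F : ℝ) (n : Fin 3 → ℝ) :
    corr (ρW F) σ1 (pdot n) = n 0 * ((4*F-1)/3) := by
  simp only [corr, ρW, pdot, σ, σ1, σ2, σ3,
    Matrix.trace, Matrix.diag, Matrix.mul_apply, Fintype.sum_prod_type,
    Fin.sum_univ_succ, Fin.sum_univ_zero, kroneckerMap_apply,
    Matrix.smul_apply, Matrix.sum_apply, Matrix.one_apply, Matrix.sub_apply,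
    Matrix.cons_val', Matrix.cons_val_zero, Matrix.cons_val_one, Matrix.head_cons,
    Matrix.empty_val', Matrix.cons_val_fin_one, Matrix.head_fin_const,
    Matrix.add_apply, smul_eq_mul]
  simp [Complex.ext_iff, Prod.ext_iff]
  ring_nf

lemma corr_ρW2 (F : ℝ) (n : Fin 3 → ℝ) :
    corr (ρW F) σ2 (pdot n) = -(n 1) * ((4*F-1)/3) := by
  simp only [corr, ρW, pdot, σ, σ1, σ2, σ3,
    Matrix.trace, Matrix.diag, Matrix.mul_apply, Fintype.sum_prod_type,
    Fin.sum_univ_succ, Fin.sum_univ_zero, kroneckerMap_apply,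
    Matrix.smul_apply, Matrix.sum_apply, Matrix.one_apply, Matrix.sub_apply,
    Matrix.cons_val', Matrix.cons_val_zero, Matrix.cons_val_one, Matrix.head_cons,
    Matrix.empty_val', Matrix.cons_val_fin_one, Matrix.head_fin_const,
    Matrix.add_apply, smul_eq_mul]
  simp [Complex.ext_iff, Prod.ext_iff]
  ring_nf

lemma sSup_coord (j : Fin 3) (a : ℝ) (ha : 0 ≤ a) :
    sSup {r : ℝ | ∃ n : Fin 3 → ℝ, (∑ i, n i ^ 2) = 1 ∧ r = n j * a} = a := by
  apply IsGreatest.csSup_eq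
  constructor
  · refine ⟨fun i => if i = j then 1 else 0, ?_, ?_⟩
    · rw [Finset.sum_eq_single j] <;> simp +contextual
    · simp
  · rintro r ⟨n, hn, rfl⟩
    have h1 : n j ^ 2 ≤ 1 := by
      rw [← hn]
      exact Finset.single_le_sum (fun i _ => sq_nonneg (n i)) (Finset.mem_univ j)
    have h2 : n j ≤ 1 := by nlinarith
    calc n j * a ≤ 1 * a := mul_le_mul_of_nonneg_right h2 ha
    _ = a := one_mul a

lemma sSup_coord_neg (j : Fin 3) (a : ℝ) (ha : 0 ≤ a) :
    sSup {r : ℝ | ∃ n : Fin 3 → ℝ, (∑ i, n i ^ 2) = 1 ∧ r = -(n j) * a} = a := by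
  rw [show {r : ℝ | ∃ n : Fin 3 → ℝ, (∑ i, n i ^ 2) = 1 ∧ r = -(n j) * a}
      = {r : ℝ | ∃ n : Fin 3 → ℝ, (∑ i, n i ^ 2) = 1 ∧ r = n j * a} from ?_]
  · exact sSup_coord j a ha
  · ext r
    constructor
    · rintro ⟨n, hn, rfl⟩
      exact ⟨fun i => -(n i), by simpa using hn, by ring⟩
    · rintro ⟨n, hn, rfl⟩
      exact ⟨fun i => -(n i), by simpa using hn, by ring⟩

end Aux

/-- twirling the pure state reduces the minimal error rate by 2/3. -/
theorem twirling_reduces_error (γ : ℝ) (hγ : 0 ≤ γ) (hγ' : γ ≤ Real.pi/2) :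
    δmin (ρW ((Real.cos (γ/2))^2)) = (2/3) * δmin (Ωstate γ) := by
  have hcos : 0 ≤ Real.cos γ := Real.cos_nonneg_of_mem_Icc
    ⟨by linarith [Real.pi_pos], hγ'⟩
  have hsq : Real.cos (γ/2) ^ 2 = (1 + Real.cos γ) / 2 := by
    have := Real.cos_sq (γ/2)
    rw [show 2*(γ/2) = γ by ring] at this
    linarith
  have ht : (4*(Real.cos (γ/2))^2-1)/3 = (2*Real.cos γ + 1)/3 := by
    rw [hsq]; ring
  have ht0 : 0 ≤ (4*(Real.cos (γ/2))^2-1)/3 := by rw [ht]; linarith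
  unfold δmin
  simp only [corr_Ω1, corr_Ω2, corr_ρW1, corr_ρW2]
  rw [sSup_coord 0 _ hcos, sSup_coord_neg 1 _ hcos,
    sSup_coord 0 _ ht0, sSup_coord_neg 1 _ ht0, ht]
  ring
end
end

section
/- Let ρ be a two-qubit state with Bloch decomposition coefficients T_{ij}, and define δ^x_min(ρ) = (1 − √(Σⱼ T₁ⱼ²))/2 and δ^y_min(ρ) = (1 − √(Σⱼ T₂ⱼ²))/2. Then the geometric discord D_g(ρ) = ‖ρ‖² − max over χ obtained by rank-one projective measurements on the first qubit of ‖χ‖² satisfies D_g(ρ) ≤ (1/2 − δ^x_min(ρ))² + (1/2 − δ^y_min(ρ))². -/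
open Matrix Kronecker Complex
open scoped ComplexOrder

noncomputable section

/-! Measuring the first qubit in the eigenbasis of `σ3` is one admissible measurement, so it
suffices to bound `‖ρ‖² - ‖χ‖²` for the resulting `χ`. The map `ρ ↦ χ` is an orthogonal
projection for the Hilbert-Schmidt inner product, whence `‖ρ‖² - ‖χ‖² = ‖ρ - χ‖²` (the same
identity bounds every `‖χ‖²` by `‖ρ‖²`, so the supremum is finite). This measurement kills
exactly the terms `σ1 ⊗ σj` and `σ2 ⊗ σj` of the Bloch decomposition, and by orthogonality of
the Pauli products `‖ρ - χ‖² = (∑ⱼ T₀ⱼ² + ∑ⱼ T₁ⱼ²) / 4`, which is the right-hand side since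
`1/2 - (1 - √a)/2 = √a / 2`. -/

open Finset

section Pinching

variable {n : Type*} [Fintype n]

lemma trace_pinching_mul_conjTranspose {A B : Matrix n n ℂ} (hA : A.IsHermitian)
    (hB : B.IsHermitian) (hAA : A * A = A) (hBB : B * B = B) (hAB : A * B = 0)
    (ρ : Matrix n n ℂ) :
    trace ((A * ρ * A + B * ρ * B) * (A * ρ * A + B * ρ * B)ᴴ)
      = trace ((A * ρ * A + B * ρ * B) * ρᴴ) := by
  have hBA : B * A = 0 := by
    simpa [conjTranspose_mul, hA.eq, hB.eq] using congrArg conjTranspose hAB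
  have hexpand : (A * ρ * A + B * ρ * B) * (A * ρ * A + B * ρ * B)ᴴ
      = A * ρ * (A * A) * ρᴴ * A + A * ρ * (A * B) * ρᴴ * B
        + B * ρ * (B * A) * ρᴴ * A + B * ρ * (B * B) * ρᴴ * B := by
    simp only [conjTranspose_add, conjTranspose_mul, hA.eq, hB.eq]
    noncomm_ring
  have hcycle (C : Matrix n n ℂ) (hCC : C * C = C) :
      trace (C * ρ * C * ρᴴ * C) = trace (C * ρ * C * ρᴴ) := by
    rw [trace_mul_comm, ← Matrix.mul_assoc, ← Matrix.mul_assoc, ← Matrix.mul_assoc, hCC]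
  rw [hexpand, hAA, hAB, hBA, hBB]
  simp only [Matrix.mul_zero, Matrix.zero_mul, add_zero, trace_add, hcycle A hAA, hcycle B hBB,
    Matrix.add_mul]

lemma re_trace_sub_pinching {A B : Matrix n n ℂ} (hA : A.IsHermitian)
    (hB : B.IsHermitian) (hAA : A * A = A) (hBB : B * B = B) (hAB : A * B = 0)
    (ρ : Matrix n n ℂ) :
    (trace ((ρ - (A * ρ * A + B * ρ * B)) * (ρ - (A * ρ * A + B * ρ * B))ᴴ)).re
      = (trace (ρ * ρᴴ)).re
        - (trace ((A * ρ * A + B * ρ * B) * (A * ρ * A + B * ρ * B)ᴴ)).re := by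
  set χ := A * ρ * A + B * ρ * B
  have hχρ : trace (χ * ρᴴ) = trace (χ * χᴴ) :=
    (trace_pinching_mul_conjTranspose hA hB hAA hBB hAB ρ).symm
  have hρχ : trace (ρ * χᴴ) = star (trace (χ * χᴴ)) := by
    rw [← hχρ, ← trace_conjTranspose, conjTranspose_mul, conjTranspose_conjTranspose]
  have hχχ : (star (trace (χ * χᴴ))).re = (trace (χ * χᴴ)).re := Complex.conj_re _
  simp only [conjTranspose_sub, Matrix.sub_mul, Matrix.mul_sub, trace_sub, Complex.sub_re,
    hχρ, hρχ, hχχ]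
  ring

end Pinching

lemma hs2_nonneg (A : M4) : 0 ≤ hs2 A :=
  (Complex.le_def.mp (posSemidef_self_mul_conjTranspose A).trace_nonneg).1

lemma hs2_sub_postMeas {P : M2} (hP : P.IsHermitian) (hPP : P * P = P) (ρ : M4) :
    hs2 (ρ - postMeas P ρ) = hs2 ρ - hs2 (postMeas P ρ) := by
  have hQ : (1 - P).IsHermitian := isHermitian_one.sub hP
  have hQQ : (1 - P) * (1 - P) = 1 - P := by
    rw [Matrix.sub_mul, Matrix.mul_sub, Matrix.mul_sub, hPP]; simp
  have hPQ : P * (1 - P) = 0 := by rw [Matrix.mul_sub, hPP]; simp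
  have hkron (X : M2) (hX : X.IsHermitian) : (X ⊗ₖ (1 : M2)).IsHermitian := by
    simp [IsHermitian, conjTranspose_kronecker, hX.eq]
  exact re_trace_sub_pinching (hkron P hP) (hkron _ hQ)
    (by rw [← mul_kronecker_mul, hPP, one_mul]) (by rw [← mul_kronecker_mul, hQQ, one_mul])
    (by rw [← mul_kronecker_mul, hPQ, one_mul, zero_kronecker]) ρ

lemma hs2_postMeas_le {P : M2} (hP : P.IsHermitian) (hPP : P * P = P) (ρ : M4) :
    hs2 (postMeas P ρ) ≤ hs2 ρ := by
  linarith [hs2_sub_postMeas hP hPP ρ, hs2_nonneg (ρ - postMeas P ρ)]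

lemma hs2_sub_sSup_postMeas_le {P : M2} (hP : P.IsHermitian) (hPP : P * P = P)
    (hPtr : P.trace = 1) (ρ : M4) :
    hs2 ρ - sSup {r : ℝ | ∃ P : M2, P.IsHermitian ∧ P * P = P ∧ P.trace = 1 ∧
        r = hs2 (postMeas P ρ)} ≤ hs2 (ρ - postMeas P ρ) := by
  have hbdd : BddAbove {r : ℝ | ∃ P : M2, P.IsHermitian ∧ P * P = P ∧ P.trace = 1 ∧
      r = hs2 (postMeas P ρ)} := by
    refine ⟨hs2 ρ, ?_⟩
    rintro r ⟨Q, hQ, hQQ, -, rfl⟩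
    exact hs2_postMeas_le hQ hQQ ρ
  rw [hs2_sub_postMeas hP hPP]
  linarith [le_csSup hbdd ⟨P, hP, hPP, hPtr, rfl⟩]

def pinch (P X : M2) : M2 := P * X * P + (1 - P) * X * (1 - P)

def postMeasₗ (P : M2) : M4 →ₗ[ℂ] M4 where
  toFun := postMeas P
  map_add' ρ ρ' := by simp only [postMeas, Matrix.mul_add, Matrix.add_mul]; abel
  map_smul' c ρ := by simp only [postMeas, Matrix.mul_smul, Matrix.smul_mul, smul_add]; rfl

lemma postMeas_kronecker (P X Y : M2) : postMeas P (X ⊗ₖ Y) = pinch P X ⊗ₖ Y := by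
  simp only [postMeas, pinch, ← mul_kronecker_mul, Matrix.mul_one, Matrix.one_mul, add_kronecker]

lemma sub_postMeas_kronecker (P X Y : M2) :
    ((LinearMap.id : M4 →ₗ[ℂ] M4) - postMeasₗ P) (X ⊗ₖ Y) = (X - pinch P X) ⊗ₖ Y := by
  ext ⟨i, j⟩ ⟨k, l⟩
  simp [postMeasₗ, postMeas_kronecker, sub_mul]

def projUp : M2 := !![1, 0; 0, 0]

lemma projUp_isHermitian : projUp.IsHermitian := by
  ext i j; fin_cases i <;> fin_cases j <;> simp [projUp]

lemma projUp_mul_self : projUp * projUp = projUp := by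
  ext i j; fin_cases i <;> fin_cases j <;> simp [projUp, Matrix.mul_apply]

lemma trace_projUp : projUp.trace = 1 := by simp [projUp, trace_fin_two]

lemma sub_pinch_projUp_one : 1 - pinch projUp 1 = 0 := by
  ext i j; fin_cases i <;> fin_cases j <;> simp [pinch, projUp, Matrix.mul_apply]

lemma sub_pinch_projUp_pauli (i : Fin 3) :
    σ i - pinch projUp (σ i) = if i = 2 then 0 else σ i := by
  fin_cases i <;> ext k l <;> fin_cases k <;> fin_cases l <;>
    simp [pinch, projUp, σ, σ1, σ2, σ3, Matrix.mul_apply, Matrix.one_apply]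

lemma pauli_isHermitian (i : Fin 3) : (σ i).IsHermitian := by
  fin_cases i <;> ext a b <;> fin_cases a <;> fin_cases b <;> simp [σ, σ1, σ2, σ3]

lemma trace_pauli_mul_pauli (i k : Fin 3) : trace (σ i * σ k) = if i = k then 2 else 0 := by
  fin_cases i <;> fin_cases k <;> simp [σ, σ1, σ2, σ3, trace_fin_two] <;> norm_num

def pauliCorrelation (c : Fin 3 → Fin 3 → ℝ) : M4 := ∑ i, ∑ j, (c i j : ℂ) • (σ i ⊗ₖ σ j)

lemma trace_pauliCorrelation_mul_conjTranspose (c : Fin 3 → Fin 3 → ℝ) :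
    trace (pauliCorrelation c * (pauliCorrelation c)ᴴ)
      = ((4 * ∑ i, ∑ j, c i j ^ 2 : ℝ) : ℂ) := by
  simp only [pauliCorrelation, conjTranspose_sum, conjTranspose_smul, Complex.star_def,
    Complex.conj_ofReal, conjTranspose_kronecker, (pauli_isHermitian _).eq, sum_mul, mul_sum,
    Matrix.smul_mul, Matrix.mul_smul, ← mul_kronecker_mul, trace_sum, trace_smul, trace_kronecker,
    trace_pauli_mul_pauli]
  simp only [ite_mul, zero_mul, mul_ite, mul_zero, smul_eq_mul, sum_ite_eq', mem_univ, if_true]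
  push_cast
  exact sum_congr rfl fun _ _ => sum_congr rfl fun _ _ => by ring

lemma hs2_smul_pauliCorrelation (c : Fin 3 → Fin 3 → ℝ) :
    hs2 ((1/4 : ℂ) • pauliCorrelation c) = (∑ i, ∑ j, c i j ^ 2) / 4 := by
  rw [hs2, conjTranspose_smul, Matrix.smul_mul, Matrix.mul_smul, trace_smul, trace_smul,
    trace_pauliCorrelation_mul_conjTranspose]
  generalize (∑ i, ∑ j, c i j ^ 2 : ℝ) = s
  norm_num [Complex.mul_re]
  ring

def blochState (x3 y3 : ℝ) (T : Fin 3 → Fin 3 → ℝ) : M4 :=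
  (1/4 : ℂ) • ((1 : M4) + (x3 : ℂ) • (σ3 ⊗ₖ (1 : M2)) + (y3 : ℂ) • ((1 : M2) ⊗ₖ σ3)
    + pauliCorrelation T)

lemma sub_postMeas_projUp_blochState (x3 y3 : ℝ) (T : Fin 3 → Fin 3 → ℝ) :
    blochState x3 y3 T - postMeas projUp (blochState x3 y3 T)
      = (1/4 : ℂ) • pauliCorrelation (fun i j => if i = 2 then 0 else T i j) := by
  have hσ3 : σ3 - pinch projUp σ3 = 0 := sub_pinch_projUp_pauli 2
  rw [show ∀ ρ : M4,
    ρ - postMeas projUp ρ = ((LinearMap.id : M4 →ₗ[ℂ] M4) - postMeasₗ projUp) ρ from fun _ => rfl]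
  simp only [blochState, pauliCorrelation, ← one_kronecker_one, map_smul, map_add, map_sum,
    sub_postMeas_kronecker, sub_pinch_projUp_one, hσ3, sub_pinch_projUp_pauli, zero_kronecker,
    smul_zero, zero_add]
  congr 1
  refine sum_congr rfl fun i _ => sum_congr rfl fun j _ => ?_
  split_ifs <;> simp

lemma half_sub_half_one_sub_sqrt_sq {a : ℝ} (ha : 0 ≤ a) : (1/2 - (1 - √a)/2) ^ 2 = a / 4 := by
  rw [show 1/2 - (1 - √a)/2 = √a / 2 by ring, div_pow, Real.sq_sqrt ha]
  norm_num

theorem geometric_discord_bound_general (x3 y3 : ℝ) (T : Fin 3 → Fin 3 → ℝ)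
    (ρ : M4)
    (hρdef : ρ = (1/4 : ℂ) • ((1 : M4) + ((x3 : ℂ)) • (σ3 ⊗ₖ (1 : M2))
        + ((y3 : ℂ)) • ((1 : M2) ⊗ₖ σ3) + ∑ i, ∑ j, ((T i j : ℂ)) • (σ i ⊗ₖ σ j))) :
    hs2 ρ - sSup {r : ℝ | ∃ P : M2, P.IsHermitian ∧ P * P = P ∧ P.trace = 1 ∧
        r = hs2 (postMeas P ρ)}
      ≤ (1/2 - (1 - Real.sqrt (∑ j, (T 0 j)^2))/2)^2
        + (1/2 - (1 - Real.sqrt (∑ j, (T 1 j)^2))/2)^2 := by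
  have hρ : ρ = blochState x3 y3 T := hρdef
  calc _ ≤ hs2 (ρ - postMeas projUp ρ) :=
        hs2_sub_sSup_postMeas_le projUp_isHermitian projUp_mul_self trace_projUp ρ
    _ = (∑ j, T 0 j ^ 2) / 4 + (∑ j, T 1 j ^ 2) / 4 := by
        rw [hρ, sub_postMeas_projUp_blochState, hs2_smul_pauliCorrelation]
        simp only [Fin.sum_univ_three, ite_pow, ne_eq, OfNat.ofNat_ne_zero, not_false_eq_true,
          zero_pow, Fin.reduceEq, ↓reduceIte, zero_add]
        ring
    _ = _ := by
        rw [half_sub_half_one_sub_sqrt_sq (by positivity),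
          half_sub_half_one_sub_sqrt_sq (by positivity)]

/-- the geometric discord is bounded by (1/2−δˣ)² + (1/2−δʸ)². -/
theorem geometric_discord_bound (x3 y3 : ℝ) (T : Fin 3 → Fin 3 → ℝ)
    (ρ : M4)
    (hρdef : ρ = (1/4 : ℂ) • ((1 : M4) + ((x3 : ℂ)) • (σ3 ⊗ₖ (1 : M2))
        + ((y3 : ℂ)) • ((1 : M2) ⊗ₖ σ3) + ∑ i, ∑ j, ((T i j : ℂ)) • (σ i ⊗ₖ σ j)))
    (hρ : ρ.PosSemidef) :
    hs2 ρ - sSup {r : ℝ | ∃ P : M2, P.IsHermitian ∧ P * P = P ∧ P.trace = 1 ∧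
        r = hs2 (postMeas P ρ)}
      ≤ (1/2 - (1 - Real.sqrt (∑ j, (T 0 j)^2))/2)^2
        + (1/2 - (1 - Real.sqrt (∑ j, (T 1 j)^2))/2)^2 :=
  geometric_discord_bound_general x3 y3 T ρ hρdef
end
end

section
/- The geometric discord of the pure state Ω(γ) = |Ω(γ)⟩⟨Ω(γ)|, with |Ω(γ)⟩ = cos(π/4-γ/2)|↑↑⟩ + sin(π/4-γ/2)|↓↓⟩, equals D_g(Ω) = (1/2)cos²γ. -/
set_option maxHeartbeats 2000000


open Matrix Kronecker Complex

noncomputable section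

lemma hs2_eval (γ : ℝ) (P : M2) (hH : P.IsHermitian) (hpp : P * P = P) (ht : P.trace = 1) :
    hs2 (Ωstate γ - postMeas P (Ωstate γ))
      = 2 * Real.cos (Real.pi/4 - γ/2)^2 * Real.sin (Real.pi/4 - γ/2)^2
        + 2 * Complex.normSq (P 0 1)
          * (Real.cos (Real.pi/4 - γ/2)^2 - Real.sin (Real.pi/4 - γ/2)^2)^2 := by
  set c := Real.cos (Real.pi/4 - γ/2) with hc
  set s := Real.sin (Real.pi/4 - γ/2) with hs
  have e1 : star (P 0 0) = P 0 0 := by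
    have := congr_fun (congr_fun hH 0) 0
    simpa [Matrix.conjTranspose_apply] using this
  have e10 : P 1 0 = star (P 0 1) := by
    have := congr_fun (congr_fun hH 1) 0
    simpa [Matrix.conjTranspose_apply] using this.symm
  have e11 : P 1 1 = 1 - P 0 0 := by
    have h := ht
    simp [Matrix.trace, Fin.sum_univ_two, Matrix.diag] at h
    linear_combination h
  have hp : P 0 0 * P 0 0 + P 0 1 * star (P 0 1) = P 0 0 := by
    have := congr_fun (congr_fun hpp 0) 0
    simpa [Matrix.mul_apply, Fin.sum_univ_two, e10] using this
  have hn : ((Complex.normSq (P 0 1) : ℝ) : ℂ) = P 0 1 * star (P 0 1) := by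
    rw [← Complex.mul_conj]; rfl
  have key : Matrix.trace ((Ωstate γ - postMeas P (Ωstate γ)) * (Ωstate γ - postMeas P (Ωstate γ))ᴴ)
      = ((2 * c^2 * s^2 + 2 * Complex.normSq (P 0 1) * (c^2 - s^2)^2 : ℝ) : ℂ) := by
    simp only [Complex.ofReal_add, Complex.ofReal_mul, Complex.ofReal_pow,
      Complex.ofReal_sub, Complex.ofReal_ofNat, hn]
    simp only [Ωstate, proj, postMeas, Ωvec, up, dn, Matrix.trace, Matrix.diag,
      Matrix.mul_apply, Matrix.conjTranspose_apply, Matrix.sub_apply, Matrix.add_apply,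
      Matrix.kroneckerMap_apply, Matrix.vecMulVec_apply, Matrix.one_apply,
      Fintype.sum_prod_type, Fin.sum_univ_two, e10, e11,
      Matrix.cons_val', Matrix.cons_val_zero, Matrix.cons_val_one, Matrix.head_cons,
      star_add, star_mul', star_sub, star_one, star_zero, star_star, _root_.map_add, _root_.map_mul, _root_.map_sub,
      _root_.map_one, Complex.conj_ofReal, starRingEnd_apply]
    simp only [e1, star_star]
    norm_num [-Complex.ofReal_cos, -Complex.ofReal_sin]
    simp only [starRingEnd_apply]
    linear_combination (8*(c:ℂ)^2*(s:ℂ)^2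
      + 4*((P 0 1)*star (P 0 1) - P 0 0 + (P 0 0)^2)*((c:ℂ)^2+(s:ℂ)^2)^2) * hp
  unfold hs2
  rw [key, Complex.ofReal_re]

/-- geometric discord of the pure state Ω(γ) is (1/2)cos²γ. -/
theorem geometric_discord_pure (γ : ℝ) (hγ : 0 ≤ γ) (hγ' : γ ≤ Real.pi/2) :
    Dg (Ωstate γ) = (1/2) * (Real.cos γ)^2 := by
  have hcs : (1/2) * (Real.cos γ)^2
      = 2 * Real.cos (Real.pi/4 - γ/2)^2 * Real.sin (Real.pi/4 - γ/2)^2 := by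
    have h2 : Real.cos γ
        = 2 * Real.sin (Real.pi/4 - γ/2) * Real.cos (Real.pi/4 - γ/2) := by
      have h := Real.sin_two_mul (Real.pi/4 - γ/2)
      rw [show 2*(Real.pi/4 - γ/2) = Real.pi/2 - γ by ring, Real.sin_pi_div_two_sub] at h
      linarith
    rw [h2]; ring
  set P₀ : M2 := !![1,0;0,0] with hP₀
  have hH0 : P₀.IsHermitian := by
    ext i j
    fin_cases i <;> fin_cases j <;>
      simp [hP₀, Matrix.conjTranspose_apply]
  have hpp0 : P₀ * P₀ = P₀ := by
    ext i j
    fin_cases i <;> fin_cases j <;>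
      simp [hP₀, Matrix.mul_apply, Fin.sum_univ_two]
  have ht0 : P₀.trace = 1 := by
    simp [hP₀, Matrix.trace, Fin.sum_univ_two]
  have hval : (1/2) * (Real.cos γ)^2
      = hs2 (Ωstate γ - postMeas P₀ (Ωstate γ)) := by
    rw [hs2_eval γ P₀ hH0 hpp0 ht0]
    have : P₀ 0 1 = 0 := by simp [hP₀]
    rw [this]
    simp
    linarith
  have hmem : (1/2) * (Real.cos γ)^2 ∈
      {r : ℝ | ∃ P : M2, P.IsHermitian ∧ P * P = P ∧ P.trace = 1 ∧
        r = hs2 (Ωstate γ - postMeas P (Ωstate γ))} :=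
    ⟨P₀, hH0, hpp0, ht0, hval⟩
  have hlb : ∀ r ∈ {r : ℝ | ∃ P : M2, P.IsHermitian ∧ P * P = P ∧ P.trace = 1 ∧
        r = hs2 (Ωstate γ - postMeas P (Ωstate γ))}, (1/2) * (Real.cos γ)^2 ≤ r := by
    rintro r ⟨P, h1, h2, h3, rfl⟩
    rw [hs2_eval γ P h1 h2 h3, hcs]
    nlinarith [Complex.normSq_nonneg (P 0 1),
      sq_nonneg (Real.cos (Real.pi/4 - γ/2)^2 - Real.sin (Real.pi/4 - γ/2)^2)]
  unfold Dg
  exact le_antisymm (csInf_le ⟨_, hlb⟩ hmem) (le_csInf ⟨_, hmem⟩ hlb)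
end
end

section
/- The geometric discord of the Werner state ρ_W(F) = (1/4)[I⊗I + ((4F-1)/3)(σ₁⊗σ₁ − σ₂⊗σ₂ + σ₃⊗σ₃)] with 1/4 ≤ F ≤ 1 equals D_g(ρ_W) = (1/2)((4F−1)/3)². In particular, with F = cos²(γ/2), D_g(ρ_W) = (1/2)((2cos γ + 1)/3)². -/
open Matrix Kronecker Complex

noncomputable section

lemma P_form (P : M2) (h1 : P.IsHermitian) (h2 : P * P = P) (h3 : P.trace = 1) :
    ∃ (α : ℝ) (b : ℂ), b * (starRingEnd ℂ) b = (α:ℂ) - (α:ℂ)^2 ∧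
      P = !![(α:ℂ), b; (starRingEnd ℂ) b, 1 - (α:ℂ)] := by
  have h10 : P 1 0 = (starRingEnd ℂ) (P 0 1) := by
    conv_lhs => rw [← h1]
    simp [Matrix.conjTranspose_apply]
  have hc : (starRingEnd ℂ) (P 0 0) = P 0 0 := by
    conv_rhs => rw [← h1]
    simp [Matrix.conjTranspose_apply]
  have h00 : P 0 0 = ((P 0 0).re : ℂ) := (Complex.conj_eq_iff_re.mp hc).symm
  have htr : P 0 0 + P 1 1 = 1 := by simpa [Matrix.trace, Fin.sum_univ_two] using h3
  have hid : P 0 0 * P 0 0 + P 0 1 * (starRingEnd ℂ) (P 0 1) = P 0 0 := by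
    rw [← h10]
    have := congrFun (congrFun h2 0) 0
    simpa [Matrix.mul_apply, Fin.sum_univ_two] using this
  refine ⟨(P 0 0).re, P 0 1, by rw [← h00]; linear_combination hid, ?_⟩
  ext i j
  fin_cases i <;> fin_cases j <;>
    simp only [Matrix.cons_val', Matrix.cons_val_zero, Matrix.cons_val_one, Matrix.head_cons,
      Matrix.head_fin_const, Matrix.empty_val', Matrix.cons_val_fin_one, Matrix.of_apply,
      Fin.mk_zero, Fin.mk_one, Fin.isValue]
  · exact h00
  · exact h10
  · rw [← h00]; linear_combination htr

def Dmat (F α : ℝ) (b : ℂ) : M4 := Matrix.of fun p q =>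
  (![![![![(-1/2 : ℂ)*b*((starRingEnd ℂ) b) + (1/2 : ℂ)*b*((starRingEnd ℂ) b)*(((4*F-1)/3:ℝ):ℂ) + (1/2 : ℂ)*(α:ℂ) + (1/2 : ℂ)*(α:ℂ)*(((4*F-1)/3:ℝ):ℂ) + (-1/2 : ℂ)*(α:ℂ)^2 + (-1/2 : ℂ)*(α:ℂ)^2*(((4*F-1)/3:ℝ):ℂ),
      (1/2 : ℂ)*((starRingEnd ℂ) b)*(((4*F-1)/3:ℝ):ℂ) + (-1 : ℂ)*(α:ℂ)*((starRingEnd ℂ) b)*(((4*F-1)/3:ℝ):ℂ)],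
     ![(1/2 : ℂ)*b*(((4*F-1)/3:ℝ):ℂ) + (-1 : ℂ)*(α:ℂ)*b*(((4*F-1)/3:ℝ):ℂ),
      (1/2 : ℂ)*(((4*F-1)/3:ℝ):ℂ) + (-1 : ℂ)*(α:ℂ)*(((4*F-1)/3:ℝ):ℂ) + (1 : ℂ)*(α:ℂ)^2*(((4*F-1)/3:ℝ):ℂ)]],
    ![![(1/2 : ℂ)*b*(((4*F-1)/3:ℝ):ℂ) + (-1 : ℂ)*(α:ℂ)*b*(((4*F-1)/3:ℝ):ℂ),
      (-1/2 : ℂ)*b*((starRingEnd ℂ) b) + (-1/2 : ℂ)*b*((starRingEnd ℂ) b)*(((4*F-1)/3:ℝ):ℂ) + (1/2 : ℂ)*(α:ℂ) + (-1/2 : ℂ)*(α:ℂ)*(((4*F-1)/3:ℝ):ℂ) + (-1/2 : ℂ)*(α:ℂ)^2 + (1/2 : ℂ)*(α:ℂ)^2*(((4*F-1)/3:ℝ):ℂ)],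
     ![(-1 : ℂ)*b^2*(((4*F-1)/3:ℝ):ℂ),
      (-1/2 : ℂ)*b*(((4*F-1)/3:ℝ):ℂ) + (1 : ℂ)*(α:ℂ)*b*(((4*F-1)/3:ℝ):ℂ)]]],
   ![![![(1/2 : ℂ)*((starRingEnd ℂ) b)*(((4*F-1)/3:ℝ):ℂ) + (-1 : ℂ)*(α:ℂ)*((starRingEnd ℂ) b)*(((4*F-1)/3:ℝ):ℂ),
      (-1 : ℂ)*((starRingEnd ℂ) b)^2*(((4*F-1)/3:ℝ):ℂ)],
     ![(-1/2 : ℂ)*b*((starRingEnd ℂ) b) + (-1/2 : ℂ)*b*((starRingEnd ℂ) b)*(((4*F-1)/3:ℝ):ℂ) + (1/2 : ℂ)*(α:ℂ) + (-1/2 : ℂ)*(α:ℂ)*(((4*F-1)/3:ℝ):ℂ) + (-1/2 : ℂ)*(α:ℂ)^2 + (1/2 : ℂ)*(α:ℂ)^2*(((4*F-1)/3:ℝ):ℂ),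
      (-1/2 : ℂ)*((starRingEnd ℂ) b)*(((4*F-1)/3:ℝ):ℂ) + (1 : ℂ)*(α:ℂ)*((starRingEnd ℂ) b)*(((4*F-1)/3:ℝ):ℂ)]],
    ![![(1/2 : ℂ)*(((4*F-1)/3:ℝ):ℂ) + (-1 : ℂ)*(α:ℂ)*(((4*F-1)/3:ℝ):ℂ) + (1 : ℂ)*(α:ℂ)^2*(((4*F-1)/3:ℝ):ℂ),
      (-1/2 : ℂ)*((starRingEnd ℂ) b)*(((4*F-1)/3:ℝ):ℂ) + (1 : ℂ)*(α:ℂ)*((starRingEnd ℂ) b)*(((4*F-1)/3:ℝ):ℂ)],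
     ![(-1/2 : ℂ)*b*(((4*F-1)/3:ℝ):ℂ) + (1 : ℂ)*(α:ℂ)*b*(((4*F-1)/3:ℝ):ℂ),
      (-1/2 : ℂ)*b*((starRingEnd ℂ) b) + (1/2 : ℂ)*b*((starRingEnd ℂ) b)*(((4*F-1)/3:ℝ):ℂ) + (1/2 : ℂ)*(α:ℂ) + (1/2 : ℂ)*(α:ℂ)*(((4*F-1)/3:ℝ):ℂ) + (-1/2 : ℂ)*(α:ℂ)^2 + (-1/2 : ℂ)*(α:ℂ)^2*(((4*F-1)/3:ℝ):ℂ)]]]] : Fin 2 → Fin 2 → Fin 2 → Fin 2 → ℂ) p.1 p.2 q.1 q.2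


set_option maxHeartbeats 1000000 in
lemma hDelta (F α : ℝ) (b : ℂ) :
    ρW F - postMeas !![(α:ℂ), b; (starRingEnd ℂ) b, 1 - (α:ℂ)] (ρW F) = Dmat F α b := by
  ext ⟨i, k⟩ ⟨j, l⟩
  fin_cases i <;> fin_cases k <;> fin_cases j <;> fin_cases l <;>
  · simp only [ρW, postMeas, Dmat, Matrix.mul_apply, Matrix.sub_apply, Matrix.add_apply,
      Matrix.smul_apply, Matrix.one_apply, Matrix.kroneckerMap_apply, σ1, σ2, σ3,
      Fintype.sum_prod_type, Fin.sum_univ_two, Matrix.cons_val', Matrix.cons_val_zero,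
      Matrix.cons_val_one, Matrix.head_cons, Matrix.head_fin_const, Matrix.empty_val',
      Matrix.cons_val_fin_one, Matrix.of_apply, smul_eq_mul, Prod.mk.injEq,
      mul_zero, zero_mul, mul_one, one_mul, add_zero, zero_add, sub_zero, zero_sub,
      mul_neg, neg_mul, neg_neg, Complex.I_mul_I, Fin.isValue, Fin.mk_zero, Fin.mk_one,
      one_ne_zero, zero_ne_one, if_true, if_false, eq_self_iff_true, and_true, true_and,
      and_false, false_and, and_self, ite_true, ite_false]
    ring

set_option maxHeartbeats 1000000 in
lemma traceDmat (F α : ℝ) (b : ℂ) (hrel : b * (starRingEnd ℂ) b = (α:ℂ) - (α:ℂ)^2) :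
    Matrix.trace ((Dmat F α b) * (Dmat F α b)ᴴ) = ((1/2 * ((4*F-1)/3)^2 : ℝ) : ℂ) := by
  simp only [Dmat, Matrix.trace, Matrix.mul_apply, Matrix.conjTranspose_apply,
      Matrix.diag_apply, Fintype.sum_prod_type, Fin.sum_univ_two,
      Matrix.cons_val', Matrix.cons_val_zero, Matrix.cons_val_one, Matrix.head_cons,
      Matrix.head_fin_const, Matrix.empty_val', Matrix.cons_val_fin_one, Matrix.of_apply,
      Complex.star_def, _root_.map_mul, map_add, map_sub, _root_.map_one, map_zero, map_neg,
      map_pow, map_ofNat, map_div₀, Complex.conj_ofReal, star_star, Complex.conj_conj,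
      Complex.ofReal_mul, Complex.ofReal_div, Complex.ofReal_pow, Complex.ofReal_sub,
      Complex.ofReal_one, Complex.ofReal_ofNat]
  push_cast
  linear_combination (((1:ℂ) + 3*((4*(F:ℂ)-1)/3)^2) *
        ((α:ℂ)^2 + b * (starRingEnd ℂ) b - (α:ℂ)) + 2*((4*(F:ℂ)-1)/3)^2) * hrel

lemma key (F : ℝ) (P : M2) (h1 : P.IsHermitian) (h2 : P * P = P) (h3 : P.trace = 1) :
    hs2 (ρW F - postMeas P (ρW F)) = 1/2 * ((4*F-1)/3)^2 := by
  obtain ⟨α, b, hrel, hP⟩ := P_form P h1 h2 h3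
  subst hP
  unfold hs2
  rw [hDelta, traceDmat F α b hrel, Complex.ofReal_re]

lemma P0_props : (!![(1:ℂ),0;0,0] : M2).IsHermitian ∧
    (!![(1:ℂ),0;0,0] : M2) * !![(1:ℂ),0;0,0] = !![(1:ℂ),0;0,0] ∧
    (!![(1:ℂ),0;0,0] : M2).trace = 1 := by
  refine ⟨?_, ?_, ?_⟩
  · ext i j; fin_cases i <;> fin_cases j <;> simp [Matrix.conjTranspose_apply]
  · ext i j; fin_cases i <;> fin_cases j <;> simp [Matrix.mul_apply, Fin.sum_univ_two]
  · simp [Matrix.trace, Fin.sum_univ_two]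

lemma Dg_werner (F : ℝ) : Dg (ρW F) = (1/2) * ((4*F-1)/3)^2 := by
  have hset : {r : ℝ | ∃ P : M2, P.IsHermitian ∧ P * P = P ∧ P.trace = 1 ∧
      r = hs2 (ρW F - postMeas P (ρW F))} = {(1/2) * ((4*F-1)/3)^2} := by
    ext r
    simp only [Set.mem_setOf_eq, Set.mem_singleton_iff]
    constructor
    · rintro ⟨P, h1, h2, h3, rfl⟩
      exact key F P h1 h2 h3
    · rintro rfl
      obtain ⟨hh, hi, ht⟩ := P0_props
      exact ⟨_, hh, hi, ht, (key F _ hh hi ht).symm⟩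
  unfold Dg
  rw [hset, csInf_singleton]

/-- geometric discord of the Werner state is (1/2)((4F−1)/3)². -/
theorem geometric_discord_werner (F : ℝ) (hF : 1/4 ≤ F) (hF1 : F ≤ 1) :
    Dg (ρW F) = (1/2) * ((4*F-1)/3)^2 ∧
    (∀ γ : ℝ, 0 ≤ γ → γ ≤ Real.pi/2 → F = (Real.cos (γ/2))^2 →
      Dg (ρW F) = (1/2) * ((2 * Real.cos γ + 1)/3)^2) := by
  have h1 := Dg_werner F
  refine ⟨h1, fun γ hγ0 hγ1 hFγ => ?_⟩
  rw [h1, hFγ]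
  have : Real.cos (γ/2) ^ 2 = 1/2 + Real.cos γ / 2 := by
    have := Real.cos_sq (γ/2)
    rw [show 2 * (γ/2) = γ by ring] at this
    linarith
  rw [this]; ring
end
end
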